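/- Let N ≥ 4. There exists a constant C > 0, depending only on N, such that for all points p, q ∈ ℝ^N with |p − q| ≥ 2: ∫_{ℝ^N} (U_p(x) U_q(x))^{2^*/2} dx ≤ C · log(|p − q|) / |p − q|^N. -/

import Mathlib

open MeasureTheory Complex Filter Metric

/-- the standard Aubin–Talenti bubble `U_p(x) = (N(N−2))^{(N−2)/4}(1+|x−p|²)^{−(N−2)/2}`. -/
noncomputable def bubble (N : ℕ) (p x : EuclideanSpace ℝ (Fin N)) : ℝ :=
  ((N : ℝ) * ((N : ℝ) - 2)) ^ (((N : ℝ) - 2) / 4) *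
    (1 + ‖x - p‖ ^ 2) ^ (-(((N : ℝ) - 2) / 2))

section AuxStmt8
open Set

/-- radial profile `(1+r²)^{-N/2}`. -/
noncomputable def auxF (N : ℕ) (r : ℝ) : ℝ := (1 + r ^ 2) ^ (-(N : ℝ) / 2)

/-- majorant profile. -/
noncomputable def auxg (N : ℕ) (d r : ℝ) : ℝ := min ((2 / d) ^ N) (auxF N r) * auxF N r

lemma auxF_pos (N : ℕ) (r : ℝ) : 0 < auxF N r :=
  Real.rpow_pos_of_pos (by positivity) _

lemma auxF_le_one (N : ℕ) (r : ℝ) : auxF N r ≤ 1 :=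
  Real.rpow_le_one_of_one_le_of_nonpos (by nlinarith [sq_nonneg r])
    (by rw [neg_div]; exact neg_nonpos.mpr (by positivity))

lemma auxF_anti (N : ℕ) {a b : ℝ} (hb : 0 ≤ b) (hba : b ≤ a) : auxF N a ≤ auxF N b :=
  Real.rpow_le_rpow_of_nonpos (by positivity) (by nlinarith)
    (by rw [neg_div]; exact neg_nonpos.mpr (by positivity))

lemma auxF_le_rpow (N : ℕ) {a : ℝ} (ha : 0 < a) : auxF N a ≤ a ^ (-(N : ℝ)) := by
  have h1 : auxF N a ≤ (a ^ 2) ^ (-(N : ℝ) / 2) :=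
    Real.rpow_le_rpow_of_nonpos (by positivity) (by nlinarith)
      (by rw [neg_div]; exact neg_nonpos.mpr (by positivity))
  calc auxF N a ≤ (a ^ 2) ^ (-(N : ℝ) / 2) := h1
    _ = a ^ (-(N : ℝ)) := by
        rw [← Real.rpow_natCast a 2, ← Real.rpow_mul ha.le]
        congr 1
        ring

lemma auxF_le_const (N : ℕ) {a d : ℝ} (hd : 0 < d) (had : d / 2 ≤ a) :
    auxF N a ≤ (2 / d) ^ N := by
  have hd2 : (0 : ℝ) < d / 2 := by linarith
  have ha : 0 < a := lt_of_lt_of_le hd2 had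
  calc auxF N a ≤ a ^ (-(N : ℝ)) := auxF_le_rpow N ha
    _ ≤ (d / 2) ^ (-(N : ℝ)) :=
        Real.rpow_le_rpow_of_nonpos hd2 had (neg_nonpos.mpr (by positivity))
    _ = (2 / d) ^ N := by
        rw [Real.rpow_neg hd2.le, Real.rpow_natCast, ← inv_pow, inv_div]

lemma auxg_nonneg (N : ℕ) {d : ℝ} (hd : 0 ≤ d) (r : ℝ) : 0 ≤ auxg N d r := by
  have h1 := (auxF_pos N r).le
  have h2 : (0:ℝ) ≤ (2 / d) ^ N := by positivity
  exact mul_nonneg (le_min h2 h1) h1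

lemma aux_core (N : ℕ) {d a b : ℝ} (hb : 0 ≤ b) (hba : b ≤ a) (hd : 0 < d)
    (hab : d ≤ a + b) : auxF N a * auxF N b ≤ auxg N d b := by
  have had : d / 2 ≤ a := by linarith
  exact mul_le_mul_of_nonneg_right
    (le_min (auxF_le_const N hd had) (auxF_anti N hb hba)) (auxF_pos N b).le

lemma aux_pointwise (N : ℕ) {d a b : ℝ} (ha : 0 ≤ a) (hb : 0 ≤ b) (hd : 0 < d)
    (hab : d ≤ a + b) : auxF N a * auxF N b ≤ auxg N d b + auxg N d a := by
  rcases le_total b a with h | h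
  · have := aux_core N hb h hd hab
    have := auxg_nonneg N hd.le a
    linarith
  · have := aux_core N ha h hd (by linarith)
    have := auxg_nonneg N hd.le b
    nlinarith [auxF_pos N a, auxF_pos N b]

lemma bubble_pow (N : ℕ) (hN : 4 ≤ N) (p q x : EuclideanSpace ℝ (Fin N)) :
    (bubble N p x * bubble N q x) ^ ((N : ℝ) / ((N : ℝ) - 2)) =
      ((N : ℝ) * ((N : ℝ) - 2)) ^ ((N : ℝ) / 2) * (auxF N ‖x - p‖ * auxF N ‖x - q‖) := by
  have hN4 : (4 : ℝ) ≤ (N : ℝ) := by exact_mod_cast hN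
  have hz : (0 : ℝ) < (N : ℝ) * ((N : ℝ) - 2) := by nlinarith
  have hN2 : (N : ℝ) - 2 ≠ 0 := by linarith
  set z : ℝ := (N : ℝ) * ((N : ℝ) - 2) with hzdef
  set e : ℝ := ((N : ℝ) - 2) / 4
  set m : ℝ := -(((N : ℝ) - 2) / 2)
  set s : ℝ := (N : ℝ) / ((N : ℝ) - 2)
  have hA : (0 : ℝ) < 1 + ‖x - p‖ ^ 2 := by positivity
  have hB : (0 : ℝ) < 1 + ‖x - q‖ ^ 2 := by positivity
  set A : ℝ := 1 + ‖x - p‖ ^ 2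
  set B : ℝ := 1 + ‖x - q‖ ^ 2
  have hze : (0 : ℝ) ≤ z ^ e := (Real.rpow_pos_of_pos hz e).le
  have h1 : bubble N p x = z ^ e * A ^ m := rfl
  have h2 : bubble N q x = z ^ e * B ^ m := rfl
  rw [h1, h2]
  rw [Real.mul_rpow (by positivity) (by positivity),
    Real.mul_rpow hze (Real.rpow_pos_of_pos hA m).le,
    Real.mul_rpow hze (Real.rpow_pos_of_pos hB m).le,
    ← Real.rpow_mul hz.le, ← Real.rpow_mul hA.le, ← Real.rpow_mul hB.le]
  have hcore : ∀ c : ℝ, (((N : ℝ) - 2) / c) * s = (N : ℝ) / c := fun c => by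
    rw [div_mul_div_comm, mul_comm c ((N : ℝ) - 2), mul_div_mul_left _ _ hN2]
  have hes : e * s + e * s = (N : ℝ) / 2 := by
    rw [show e = ((N : ℝ) - 2) / 4 from rfl, hcore]; ring
  have hms : m * s = -(N : ℝ) / 2 := by
    rw [show m = -(((N : ℝ) - 2) / 2) from rfl, neg_mul, hcore]; ring
  rw [hms]
  have : auxF N ‖x - p‖ = A ^ (-(N:ℝ)/2) := rfl
  rw [show z ^ (e * s) * A ^ (-(N:ℝ)/2) * (z ^ (e * s) * B ^ (-(N:ℝ)/2)) =
      (z ^ (e * s) * z ^ (e * s)) * (A ^ (-(N:ℝ)/2) * B ^ (-(N:ℝ)/2)) by ring,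
    ← Real.rpow_add hz, hes]
  rfl

lemma auxF_continuous (N : ℕ) : Continuous (auxF N) := by
  unfold auxF
  exact Continuous.rpow_const (by continuity) (fun r => Or.inl (by positivity))

lemma auxg_continuous (N : ℕ) (d : ℝ) : Continuous (auxg N d) :=
  (continuous_const.min (auxF_continuous N)).mul (auxF_continuous N)

lemma auxg_le_sq (N : ℕ) {d : ℝ} (hd : 2 ≤ d) (r : ℝ) :
    auxg N d r ≤ (1 + r ^ 2) ^ (-(2 * (N : ℝ)) / 2) := by
  have h : (1 + r ^ 2 : ℝ) ^ (-(2 * (N : ℝ)) / 2) = auxF N r * auxF N r := by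
    unfold auxF
    rw [← Real.rpow_add (by positivity)]
    congr 1
    ring
  rw [h]
  exact mul_le_mul_of_nonneg_right (min_le_right _ _) (auxF_pos N r).le

lemma auxg_norm_integrable (N : ℕ) (hN : 4 ≤ N) {d : ℝ} (hd : 2 ≤ d)
    (c : EuclideanSpace ℝ (Fin N)) :
    Integrable (fun x : EuclideanSpace ℝ (Fin N) => auxg N d ‖x - c‖) := by
  have h0 : Integrable (fun x : EuclideanSpace ℝ (Fin N) => auxg N d ‖x‖) := by
    have hnr : (Module.finrank ℝ (EuclideanSpace ℝ (Fin N)) : ℝ) < 2 * N := by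
      rw [finrank_euclideanSpace_fin]
      have : (4:ℝ) ≤ N := by exact_mod_cast hN
      linarith
    refine (integrable_rpow_neg_one_add_norm_sq hnr).mono'
      (((auxg_continuous N d).comp continuous_norm).aestronglyMeasurable)
      (Filter.Eventually.of_forall fun x => ?_)
    rw [Real.norm_eq_abs, _root_.abs_of_nonneg (auxg_nonneg N (by linarith : (0:ℝ) ≤ d) _)]
    exact auxg_le_sq N hd _
  exact h0.comp_sub_right c

lemma pow_mul_auxF_le_inv (N : ℕ) (hN : 4 ≤ N) {r : ℝ} (hr : 1 ≤ r) :
    r ^ (N - 1) * auxF N r ≤ r⁻¹ := by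
  have hr0 : (0 : ℝ) < r := by linarith
  have h1 : r ^ (N - 1) * auxF N r ≤ r ^ (N - 1) * r ^ (-(N : ℝ)) :=
    mul_le_mul_of_nonneg_left (auxF_le_rpow N hr0) (by positivity)
  refine h1.trans (le_of_eq ?_)
  rw [← Real.rpow_natCast r (N - 1), ← Real.rpow_add hr0]
  rw [show r⁻¹ = r ^ (-1 : ℝ) by rw [Real.rpow_neg_one]]
  congr 1
  have : ((N - 1 : ℕ) : ℝ) = (N : ℝ) - 1 := by
    rw [Nat.cast_sub (by omega : 1 ≤ N), Nat.cast_one]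
  rw [this]; ring

lemma pow_mul_auxF_le_rpow (N : ℕ) (hN : 4 ≤ N) {r : ℝ} (hr : 1 ≤ r) :
    r ^ (N - 1) * (auxF N r * auxF N r) ≤ r ^ (-(N : ℝ) - 1) := by
  have hr0 : (0 : ℝ) < r := by linarith
  have h1 : r ^ (N - 1) * (auxF N r * auxF N r) ≤ r ^ (N - 1) * (r ^ (-(N : ℝ)) * r ^ (-(N : ℝ))) := by
    apply mul_le_mul_of_nonneg_left _ (by positivity)
    exact mul_le_mul (auxF_le_rpow N hr0) (auxF_le_rpow N hr0) (auxF_pos N r).le (by positivity)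
  refine h1.trans (le_of_eq ?_)
  rw [← Real.rpow_natCast r (N - 1), ← Real.rpow_add hr0, ← Real.rpow_add hr0]
  congr 1
  have hc : ((N - 1 : ℕ) : ℝ) = (N : ℝ) - 1 := by
    rw [Nat.cast_sub (by omega : 1 ≤ N), Nat.cast_one]
  rw [hc]; ring

lemma oneDim_bound (N : ℕ) (hN : 4 ≤ N) {d : ℝ} (hd : 2 ≤ d) :
    ∫ r in Set.Ioi (0 : ℝ), r ^ (N - 1) * auxg N d r ≤ (2 / d) ^ N * (2 + Real.log d) := by
  have hd0 : (0 : ℝ) < d := by linarith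
  have ha1 : (1 : ℝ) ≤ d / 2 := by linarith
  have ha0 : (0 : ℝ) < d / 2 := by linarith
  have hC0 : (0 : ℝ) ≤ (2 / d) ^ N := by positivity
  set φ : ℝ → ℝ := fun r => r ^ (N - 1) * auxg N d r with hφ
  have hφc : Continuous φ := by
    exact (continuous_pow _).mul (auxg_continuous N d)
  have hφ_nonneg : ∀ r ∈ Set.Ioi (0:ℝ), 0 ≤ φ r := fun r hr =>
    mul_nonneg (pow_nonneg (le_of_lt hr) _) (auxg_nonneg N hd0.le r)
  -- integrability pieces
  have hint1 : IntegrableOn φ (Set.Ioc (0:ℝ) 1) := hφc.integrableOn_Ioc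
  have hint2 : IntegrableOn φ (Set.Ioc (1:ℝ) (d/2)) := hφc.integrableOn_Ioc
  have hrpow_int : IntegrableOn (fun r : ℝ => r ^ (-(N:ℝ) - 1)) (Set.Ioi (d/2)) := by
    apply integrableOn_Ioi_rpow_of_lt _ ha0
    have : (4:ℝ) ≤ N := by exact_mod_cast hN
    linarith
  have hb3 : ∀ r ∈ Set.Ioi (d/2), φ r ≤ r ^ (-(N:ℝ) - 1) := by
    intro r hr
    have hr1 : 1 ≤ r := le_trans ha1 (le_of_lt hr)
    refine le_trans ?_ (pow_mul_auxF_le_rpow N hN hr1)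
    apply mul_le_mul_of_nonneg_left _ (by positivity)
    exact mul_le_mul_of_nonneg_right (min_le_right _ _) (auxF_pos N r).le
  have hint3 : IntegrableOn φ (Set.Ioi (d/2)) := by
    refine hrpow_int.mono' (hφc.aestronglyMeasurable.restrict) ?_
    filter_upwards [ae_restrict_mem measurableSet_Ioi] with r hr
    rw [Real.norm_eq_abs, _root_.abs_of_nonneg (hφ_nonneg r (lt_trans ha0 hr))]
    exact hb3 r hr
  have hintOc : IntegrableOn φ (Set.Ioc (0:ℝ) (d/2)) := by
    rw [← Set.Ioc_union_Ioc_eq_Ioc (zero_le_one) ha1]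
    exact hint1.union hint2
  -- split the integral
  have hsplit : ∫ r in Set.Ioi (0:ℝ), φ r =
      (∫ r in Set.Ioc (0:ℝ) 1, φ r) + (∫ r in Set.Ioc (1:ℝ) (d/2), φ r)
        + ∫ r in Set.Ioi (d/2), φ r := by
    rw [← Set.Ioc_union_Ioi_eq_Ioi ha0.le,
      setIntegral_union (Set.Ioc_disjoint_Ioi le_rfl) measurableSet_Ioi hintOc hint3,
      ← Set.Ioc_union_Ioc_eq_Ioc (zero_le_one (α := ℝ)) ha1,
      setIntegral_union (Disjoint.mono_right Set.Ioc_subset_Ioi_self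
        (Set.Ioc_disjoint_Ioi le_rfl)) measurableSet_Ioc hint1 hint2]
  rw [hsplit]
  -- piece 1
  have hp1 : ∫ r in Set.Ioc (0:ℝ) 1, φ r ≤ (2/d)^N := by
    have : ∫ r in Set.Ioc (0:ℝ) 1, φ r ≤ ∫ _ in Set.Ioc (0:ℝ) 1, (2/d)^N := by
      refine setIntegral_mono_on hint1 ((integrableOn_const_iff (by finiteness)).mpr (Or.inr ?_)) measurableSet_Ioc ?_
      · rw [Real.volume_Ioc]; exact ENNReal.ofReal_lt_top
      · intro r hr
        have hr0 : 0 < r := hr.1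
        have hr1 : r ≤ 1 := hr.2
        have h1 : r ^ (N - 1) ≤ 1 := pow_le_one₀ hr0.le hr1
        have h2 : auxg N d r ≤ (2/d)^N * 1 :=
          mul_le_mul (min_le_left _ _) (auxF_le_one N r) (auxF_pos N r).le hC0
        calc φ r ≤ 1 * auxg N d r :=
              mul_le_mul_of_nonneg_right h1 (auxg_nonneg N hd0.le r)
          _ = auxg N d r := one_mul _
          _ ≤ (2/d)^N := by linarith
    simpa using this
  -- piece 2
  have hp2 : ∫ r in Set.Ioc (1:ℝ) (d/2), φ r ≤ (2/d)^N * Real.log d := by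
    have hmono : ∫ r in Set.Ioc (1:ℝ) (d/2), φ r ≤
        ∫ r in Set.Ioc (1:ℝ) (d/2), (2/d)^N * r⁻¹ := by
      refine setIntegral_mono_on hint2 ?_ measurableSet_Ioc ?_
      · apply Integrable.const_mul
        refine (ContinuousOn.integrableOn_Icc (continuousOn_inv₀.mono ?_)).mono_set
          Set.Ioc_subset_Icc_self
        intro x hx
        exact ne_of_gt (lt_of_lt_of_le one_pos hx.1)
      · intro r hr
        have hr1 : 1 ≤ r := hr.1.le
        have hr0 : 0 < r := by linarith
        calc φ r ≤ r ^ (N-1) * ((2/d)^N * auxF N r) := by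
              apply mul_le_mul_of_nonneg_left _ (by positivity)
              exact mul_le_mul_of_nonneg_right (min_le_left _ _) (auxF_pos N r).le
          _ = (2/d)^N * (r ^ (N-1) * auxF N r) := by ring
          _ ≤ (2/d)^N * r⁻¹ :=
              mul_le_mul_of_nonneg_left (pow_mul_auxF_le_inv N hN hr1) hC0
    refine hmono.trans ?_
    rw [MeasureTheory.integral_const_mul]
    apply mul_le_mul_of_nonneg_left _ hC0
    have : ∫ r in Set.Ioc (1:ℝ) (d/2), r⁻¹ = Real.log (d/2) := by
      rw [← intervalIntegral.integral_of_le ha1, integral_inv_of_pos one_pos ha0]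
      norm_num
    rw [this]
    exact Real.log_le_log ha0 (by linarith)
  -- piece 3
  have hp3 : ∫ r in Set.Ioi (d/2), φ r ≤ (2/d)^N := by
    have hmono : ∫ r in Set.Ioi (d/2), φ r ≤ ∫ r in Set.Ioi (d/2), r ^ (-(N:ℝ)-1) :=
      setIntegral_mono_on hint3 hrpow_int measurableSet_Ioi hb3
    refine hmono.trans ?_
    rw [integral_Ioi_rpow_of_lt (by
        have : (4:ℝ) ≤ N := by exact_mod_cast hN
        linarith) ha0]
    have hNpos : (0:ℝ) < N := by positivity
    have heq : (d/2) ^ (-(N:ℝ) - 1 + 1) = (2/d)^N := by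
      rw [show -(N:ℝ) - 1 + 1 = -(N:ℝ) by ring, Real.rpow_neg ha0.le, Real.rpow_natCast,
        ← inv_pow, inv_div]
    rw [show -(N:ℝ) - 1 + 1 = -(N:ℝ) by ring]
    rw [Real.rpow_neg ha0.le, Real.rpow_natCast, ← inv_pow, inv_div, neg_div_neg_eq,
      div_le_iff₀ hNpos]
    have h1 : (1:ℝ) ≤ N := by exact_mod_cast (by omega : 1 ≤ N)
    nlinarith [hC0]
  -- combine
  have hlog2 : (0:ℝ) ≤ Real.log d := Real.log_nonneg (by linarith)
  nlinarith [hp1, hp2, hp3]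

lemma radial_eq (N : ℕ) (hN : 4 ≤ N) (f : ℝ → ℝ) :
    ∫ x : EuclideanSpace ℝ (Fin N), f ‖x‖ =
      (N : ℝ) * ((volume (ball (0 : EuclideanSpace ℝ (Fin N)) 1)).toReal *
        ∫ y in Set.Ioi (0 : ℝ), y ^ (N - 1) * f y) := by
  haveI : Nontrivial (EuclideanSpace ℝ (Fin N)) :=
    Module.nontrivial_of_finrank_pos (R := ℝ)
      (by rw [finrank_euclideanSpace_fin]; omega)
  rw [MeasureTheory.integral_fun_norm_addHaar (volume : Measure (EuclideanSpace ℝ (Fin N))) f]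
  simp only [finrank_euclideanSpace_fin, nsmul_eq_mul, smul_eq_mul]
  rfl


end AuxStmt8

/-- `∫ (U_p U_q)^{2^*/2} ≤ C log|p−q| / |p−q|^N` for `|p−q| ≥ 2`
(here `2^*/2 = N/(N−2)`). -/
theorem stmt_8 (N : ℕ) (hN : 4 ≤ N) :
    ∃ C : ℝ, 0 < C ∧ ∀ p q : EuclideanSpace ℝ (Fin N), 2 ≤ ‖p - q‖ →
      (∫ x, (bubble N p x * bubble N q x) ^ ((N : ℝ) / ((N : ℝ) - 2))) ≤
        C * Real.log ‖p - q‖ / ‖p - q‖ ^ (N : ℝ) := by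
  have hN4R : (4 : ℝ) ≤ (N : ℝ) := by exact_mod_cast hN
  set K : ℝ := ((N : ℝ) * ((N : ℝ) - 2)) ^ ((N : ℝ) / 2) with hKdef
  have hK : 0 < K := Real.rpow_pos_of_pos (by nlinarith) _
  set V : ℝ := (volume (ball (0 : EuclideanSpace ℝ (Fin N)) 1)).toReal with hVdef
  have hV : 0 < V := by
    apply ENNReal.toReal_pos (measure_ball_pos volume _ one_pos).ne' measure_ball_lt_top.ne
  have hl2 : 0 < Real.log 2 := Real.log_pos (by norm_num)
  refine ⟨K * 2 * N * V * 2 ^ N * (2 / Real.log 2 + 1), by positivity, ?_⟩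
  intro p q hpq
  set d : ℝ := ‖p - q‖ with hddef
  have hd0 : (0 : ℝ) < d := by linarith
  have hgq := auxg_norm_integrable N hN hpq q
  have hgp := auxg_norm_integrable N hN hpq p
  -- step 1 : rewrite the integrand
  have h1 : (∫ x, (bubble N p x * bubble N q x) ^ ((N : ℝ) / ((N : ℝ) - 2))) =
      K * ∫ x, auxF N ‖x - p‖ * auxF N ‖x - q‖ := by
    rw [← MeasureTheory.integral_const_mul]
    exact integral_congr_ae (Filter.Eventually.of_forall fun x => bubble_pow N hN p q x)
  -- step 2 : pointwise domination
  have h2 : (∫ x, auxF N ‖x - p‖ * auxF N ‖x - q‖) ≤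
      ∫ x : EuclideanSpace ℝ (Fin N), (auxg N d ‖x - q‖ + auxg N d ‖x - p‖) := by
    apply integral_mono_of_nonneg
    · exact Filter.Eventually.of_forall fun x =>
        mul_nonneg (auxF_pos N _).le (auxF_pos N _).le
    · exact hgq.add hgp
    · apply Filter.Eventually.of_forall
      intro x
      apply aux_pointwise N (norm_nonneg _) (norm_nonneg _) hd0
      calc d = ‖(x - q) - (x - p)‖ := by rw [show (x - q) - (x - p) = p - q by abel]
        _ ≤ ‖x - q‖ + ‖x - p‖ := norm_sub_le _ _
        _ = ‖x - p‖ + ‖x - q‖ := by ring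
  -- step 3 : translation invariance
  have h3 : (∫ x : EuclideanSpace ℝ (Fin N), (auxg N d ‖x - q‖ + auxg N d ‖x - p‖)) =
      2 * ∫ x : EuclideanSpace ℝ (Fin N), auxg N d ‖x‖ := by
    rw [integral_add hgq hgp,
      integral_sub_right_eq_self (fun y : EuclideanSpace ℝ (Fin N) => auxg N d ‖y‖) q,
      integral_sub_right_eq_self (fun y : EuclideanSpace ℝ (Fin N) => auxg N d ‖y‖) p]
    ring
  -- step 4 : radial representation
  have h4 : (∫ x : EuclideanSpace ℝ (Fin N), auxg N d ‖x‖) =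
      (N : ℝ) * (V * ∫ y in Set.Ioi (0 : ℝ), y ^ (N - 1) * auxg N d y) :=
    radial_eq N hN (auxg N d)
  -- step 5 : the one-dimensional bound
  have h5 := oneDim_bound N hN hpq
  have hI_nonneg : (0 : ℝ) ≤ ∫ y in Set.Ioi (0 : ℝ), y ^ (N - 1) * auxg N d y := by
    apply setIntegral_nonneg measurableSet_Ioi
    intro y hy
    exact mul_nonneg (pow_nonneg (le_of_lt hy) _) (auxg_nonneg N hd0.le y)
  have hlogd : Real.log 2 ≤ Real.log d := Real.log_le_log (by norm_num) hpq
  have hkey : 2 + Real.log d ≤ (2 / Real.log 2 + 1) * Real.log d := by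
    have hc : 2 / Real.log 2 * Real.log 2 = 2 := div_mul_cancel₀ _ hl2.ne'
    nlinarith [mul_le_mul_of_nonneg_left hlogd (le_of_lt (div_pos two_pos hl2))]
  rw [h1, Real.rpow_natCast]
  calc K * ∫ x, auxF N ‖x - p‖ * auxF N ‖x - q‖
      ≤ K * ∫ x : EuclideanSpace ℝ (Fin N), (auxg N d ‖x - q‖ + auxg N d ‖x - p‖) :=
        mul_le_mul_of_nonneg_left h2 hK.le
    _ = K * (2 * ((N : ℝ) * (V * ∫ y in Set.Ioi (0 : ℝ), y ^ (N - 1) * auxg N d y))) := by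
        rw [h3, h4]
    _ ≤ K * (2 * ((N : ℝ) * (V * ((2 / d) ^ N * (2 + Real.log d))))) := by
        have hNV : (0 : ℝ) ≤ K * (2 * (N : ℝ)) := by positivity
        apply mul_le_mul_of_nonneg_left _ hK.le
        apply mul_le_mul_of_nonneg_left _ (by norm_num : (0:ℝ) ≤ 2)
        apply mul_le_mul_of_nonneg_left _ (by positivity : (0:ℝ) ≤ (N:ℝ))
        exact mul_le_mul_of_nonneg_left h5 hV.le
    _ = (K * 2 * N * V * 2 ^ N / d ^ N) * (2 + Real.log d) := by
        rw [div_pow]; ring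
    _ ≤ (K * 2 * N * V * 2 ^ N / d ^ N) * ((2 / Real.log 2 + 1) * Real.log d) := by
        apply mul_le_mul_of_nonneg_left hkey (by positivity)
    _ = K * 2 * N * V * 2 ^ N * (2 / Real.log 2 + 1) * Real.log d / d ^ N := by
        ring
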